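/- At the point 𝐲 = (a,0,…,0,a') the Cartan tensor coefficients C_{ijk}(𝐲) = (1/4)∂³(F²)/∂y^i∂y^j∂y^k(𝐲) satisfy: C_{111} = 3aL₁₁ + 2a³L₁₁₁; C_{nn1} = aL₁₂ + 2aa'²L₁₂₂; C_{n11} = a'L₁₂ + 2a²a'L₁₁₂; C_{nnn} = 3a'L₂₂ + 2a'³L₂₂₂; C_{ii1} = aL₁₁ and C_{iin} = a'L₁₂ for 2 ≤ i ≤ n₁; C_{ii1} = aL₁₂ and C_{iin} = a'L₂₂ for n₁+1 ≤ i ≤ n−1; and every coefficient C_{ijk}(𝐲) whose index triple is not a permutation of one of the listed triples vanishes. -/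

import Mathlib

noncomputable section

open Matrix MeasureTheory

/-- The `i`-th standard basis vector of `ℝⁿ`. -/
def eb (n : ℕ) (i : Fin n) : Fin n → ℝ := Pi.single i 1

/-- Partial derivative of a function on `ℝⁿ` in the `i`-th coordinate direction. -/
def pd {n : ℕ} (f : (Fin n → ℝ) → ℝ) (i : Fin n) (y : Fin n → ℝ) : ℝ :=
  fderiv ℝ f y (eb n i)

/-- The fundamental tensor `g_{ij}(y) = ½ ∂²(F²)/∂yⁱ∂yʲ`. -/
def hess {n : ℕ} (F : (Fin n → ℝ) → ℝ) (y : Fin n → ℝ) :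
    Matrix (Fin n) (Fin n) ℝ :=
  Matrix.of fun i j => (1 / 2 : ℝ) * pd (pd (fun z => F z ^ 2) j) i y

/-- A Minkowski norm on `ℝⁿ`. -/
structure IsMinkowskiNorm {n : ℕ} (F : (Fin n → ℝ) → ℝ) : Prop where
  continuous : Continuous F
  pos : ∀ y : Fin n → ℝ, y ≠ 0 → 0 < F y
  zero : F 0 = 0
  homog : ∀ lam : ℝ, 0 < lam → ∀ y : Fin n → ℝ, F (lam • y) = lam * F y
  smooth : ContDiffOn ℝ (⊤ : ℕ∞) F {(0 : Fin n → ℝ)}ᶜ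
  posdef : ∀ y : Fin n → ℝ, y ≠ 0 → (hess F y).PosDef

/-- Partial derivative of a function of two real variables in the first variable. -/
def D1 (L : ℝ × ℝ → ℝ) (p : ℝ × ℝ) : ℝ := fderiv ℝ L p (1, 0)

/-- Partial derivative of a function of two real variables in the second variable. -/
def D2 (L : ℝ × ℝ → ℝ) (p : ℝ × ℝ) : ℝ := fderiv ℝ L p (0, 1)

/-- The closed first quadrant of `ℝ²` minus the origin. -/
def quadrant : Set (ℝ × ℝ) := {p : ℝ × ℝ | 0 ≤ p.1 ∧ 0 ≤ p.2 ∧ p ≠ 0}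

/-- The `(α₁,α₂)`-norm `F(y) = √(L(α₁², α₂²))` on `ℝ^(n₁+n₂)`, where
`α₁² = Σ_{i ≤ n₁} (yⁱ)²` and `α₂² = Σ_{i > n₁} (yⁱ)²`. -/
def Fa (n₁ n₂ : ℕ) (L : ℝ × ℝ → ℝ) : (Fin (n₁ + n₂) → ℝ) → ℝ :=
  fun y => Real.sqrt (L (∑ i, if i.val < n₁ then y i ^ 2 else 0,
                         ∑ i, if n₁ ≤ i.val then y i ^ 2 else 0))

/-- The Cartan tensor `C_{ijk}(y) = ¼ ∂³(F²)/∂yⁱ∂yʲ∂yᵏ`. -/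
def cartan {n : ℕ} (F : (Fin n → ℝ) → ℝ) (y : Fin n → ℝ) (i j k : Fin n) : ℝ :=
  (1 / 4 : ℝ) * pd (pd (pd (fun z => F z ^ 2) k) j) i y

namespace CartanAux
variable (n₁ n₂ : ℕ)

def sf (z : Fin (n₁ + n₂) → ℝ) : ℝ := ∑ i, if i.val < n₁ then z i ^ 2 else 0
def tf (z : Fin (n₁ + n₂) → ℝ) : ℝ := ∑ i, if n₁ ≤ i.val then z i ^ 2 else 0
def pf (z : Fin (n₁ + n₂) → ℝ) : ℝ × ℝ := (sf n₁ n₂ z, tf n₁ n₂ z)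
def ev (k : Fin (n₁ + n₂)) : ℝ × ℝ := if k.val < n₁ then (1, 0) else (0, 1)

def pD (z : Fin (n₁ + n₂) → ℝ) : (Fin (n₁ + n₂) → ℝ) →L[ℝ] ℝ × ℝ :=
  (∑ i, if i.val < n₁ then (2 * z i) • ContinuousLinearMap.proj i else 0).prod
  (∑ i, if n₁ ≤ i.val then (2 * z i) • ContinuousLinearMap.proj i else 0)

lemma sq_hasFDerivAt (z : Fin (n₁ + n₂) → ℝ) (i : Fin (n₁ + n₂)) :
    HasFDerivAt (fun w : Fin (n₁ + n₂) → ℝ => w i ^ 2)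
      ((2 * z i) • ContinuousLinearMap.proj (R := ℝ) (φ := fun _ : Fin (n₁ + n₂) => ℝ) i) z := by
  have h : HasFDerivAt (fun w : Fin (n₁ + n₂) → ℝ => w i)
      (ContinuousLinearMap.proj (R := ℝ) (φ := fun _ : Fin (n₁ + n₂) => ℝ) i) z :=
    hasFDerivAt_apply i z
  have := h.fun_mul h
  convert! this using 1
  · ext w; ring
  · ext w
    simp [ContinuousLinearMap.proj, smul_eq_mul]
    ring

lemma hasFDerivAt_pf (z : Fin (n₁ + n₂) → ℝ) : HasFDerivAt (pf n₁ n₂) (pD n₁ n₂ z) z := by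
  apply HasFDerivAt.prodMk
  · apply HasFDerivAt.fun_sum
    intro i _
    by_cases h : i.val < n₁ <;> simp only [h, if_true, if_false]
    · exact sq_hasFDerivAt n₁ n₂ z i
    · exact hasFDerivAt_const 0 z
  · apply HasFDerivAt.fun_sum
    intro i _
    by_cases h : n₁ ≤ i.val <;> simp only [h, if_true, if_false]
    · exact sq_hasFDerivAt n₁ n₂ z i
    · exact hasFDerivAt_const 0 z

lemma pD_eval (z : Fin (n₁ + n₂) → ℝ) (j : Fin (n₁ + n₂)) :
    pD n₁ n₂ z (eb (n₁ + n₂) j) = (2 * z j) • ev n₁ n₂ j := by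
  have key : ∀ (c : Fin (n₁ + n₂) → Prop) [DecidablePred c],
      (∑ i, if c i then (2 * z i) • ContinuousLinearMap.proj (R := ℝ)
        (φ := fun _ : Fin (n₁ + n₂) => ℝ) i else 0) (eb (n₁ + n₂) j)
      = if c j then 2 * z j else 0 := by
    intro c _
    rw [ContinuousLinearMap.sum_apply]
    rw [Finset.sum_eq_single j]
    · by_cases h : c j <;> simp [h, eb, ContinuousLinearMap.proj_apply]
    · intro i _ hij
      by_cases h : c i <;> simp [h, eb, ContinuousLinearMap.proj_apply, Pi.single_apply, hij.symm]
    · simp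
  unfold pD ev
  ext
  · rw [ContinuousLinearMap.prod_apply]
    simp only
    rw [key]
    by_cases h : j.val < n₁ <;> simp [h]
  · rw [ContinuousLinearMap.prod_apply]
    simp only
    rw [key]
    by_cases h : j.val < n₁
    · simp [h, Nat.not_le.mpr h]
    · simp [h, Nat.not_lt.mp h]



def ph (L : ℝ × ℝ → ℝ) (v : ℝ × ℝ) (q : ℝ × ℝ) : ℝ := fderiv ℝ L q v
def ps (L : ℝ × ℝ → ℝ) (w v : ℝ × ℝ) (q : ℝ × ℝ) : ℝ := fderiv ℝ (ph L v) q w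
def pt (L : ℝ × ℝ → ℝ) (u w v : ℝ × ℝ) (q : ℝ × ℝ) : ℝ := fderiv ℝ (ps L w v) q u

section Smooth
variable {L : ℝ × ℝ → ℝ} {V : Set (ℝ × ℝ)} (hVopen : IsOpen V) (hLsm : ContDiffOn ℝ (⊤ : ℕ∞) L V)
include hVopen hLsm

lemma ph_smooth (v : ℝ × ℝ) : ContDiffOn ℝ (⊤ : ℕ∞) (ph L v) V :=
  (hLsm.fderiv_of_isOpen hVopen (by simp)).clm_apply contDiffOn_const

lemma ps_smooth (w v : ℝ × ℝ) : ContDiffOn ℝ (⊤ : ℕ∞) (ps L w v) V :=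
  (((ph_smooth hVopen hLsm v).fderiv_of_isOpen hVopen (by simp)).clm_apply contDiffOn_const)

lemma pt_smooth (u w v : ℝ × ℝ) : ContDiffOn ℝ (⊤ : ℕ∞) (pt L u w v) V :=
  (((ps_smooth hVopen hLsm w v).fderiv_of_isOpen hVopen (by simp)).clm_apply contDiffOn_const)

omit hLsm in
lemma diffat_of_smooth {F : Type*} [NormedAddCommGroup F] [NormedSpace ℝ F]
    {f : ℝ × ℝ → F} (hf : ContDiffOn ℝ (⊤ : ℕ∞) f V) {q : ℝ × ℝ} (hq : q ∈ V) :
    DifferentiableAt ℝ f q :=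
  ((hf q hq).contDiffAt (hVopen.mem_nhds hq)).differentiableAt (by simp)

lemma ps_symm {q : ℝ × ℝ} (hq : q ∈ V) (u v : ℝ × ℝ) : ps L u v q = ps L v u q := by
  have hdiff : ∀ p ∈ V, DifferentiableAt ℝ L p := fun p hp => diffat_of_smooth hVopen hLsm hp
  have hd : ∀ᶠ p in nhds q, HasFDerivAt L (fderiv ℝ L p) p :=
    Filter.eventually_of_mem (hVopen.mem_nhds hq) fun p hp => (hdiff p hp).hasFDerivAt
  have hL1 : DifferentiableAt ℝ (fderiv ℝ L) q :=
    diffat_of_smooth (f := fderiv ℝ L) hVopen (hLsm.fderiv_of_isOpen hVopen (by simp)) hq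
  have h2 : HasFDerivAt (fderiv ℝ L) (fderiv ℝ (fderiv ℝ L) q) q := hL1.hasFDerivAt
  have key := second_derivative_symmetric_of_eventually hd h2
  have hps : ∀ w v : ℝ × ℝ, ps L w v q = fderiv ℝ (fderiv ℝ L) q w v := by
    intro w v
    have hA : HasFDerivAt (fun p => (ContinuousLinearMap.apply ℝ ℝ v) (fderiv ℝ L p))
        ((ContinuousLinearMap.apply ℝ ℝ v).comp (fderiv ℝ (fderiv ℝ L) q)) q :=
      (ContinuousLinearMap.apply ℝ ℝ v).hasFDerivAt.comp q h2
    have : ps L w v q = ((ContinuousLinearMap.apply ℝ ℝ v).comp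
        (fderiv ℝ (fderiv ℝ L) q)) w := by
      unfold ps ph
      rw [← hA.fderiv]
      rfl
    simpa using this
  rw [hps u v, hps v u, key u v]

end Smooth

section PdTools
variable {n₁ n₂ : ℕ}

lemma pd_congr {f g : (Fin (n₁ + n₂) → ℝ) → ℝ} {z : Fin (n₁ + n₂) → ℝ}
    (hfg : ∀ᶠ w in nhds z, f w = g w) (j : Fin (n₁ + n₂)) : pd f j z = pd g j z := by
  unfold pd
  rw [Filter.EventuallyEq.fderiv_eq hfg]

lemma pd_coord (k j : Fin (n₁ + n₂)) (z : Fin (n₁ + n₂) → ℝ) :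
    pd (fun w : Fin (n₁ + n₂) → ℝ => w k) j z = if k = j then 1 else 0 := by
  unfold pd
  rw [(hasFDerivAt_apply k z).fderiv]
  simp [eb, ContinuousLinearMap.proj_apply, Pi.single_apply]

lemma pd_mul {f g : (Fin (n₁ + n₂) → ℝ) → ℝ} {z : Fin (n₁ + n₂) → ℝ}
    (hf : DifferentiableAt ℝ f z) (hg : DifferentiableAt ℝ g z) (j : Fin (n₁ + n₂)) :
    pd (fun w => f w * g w) j z = f z * pd g j z + g z * pd f j z := by
  unfold pd
  rw [fderiv_fun_mul hf hg]
  simp [smul_eq_mul]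

lemma pd_add {f g : (Fin (n₁ + n₂) → ℝ) → ℝ} {z : Fin (n₁ + n₂) → ℝ}
    (hf : DifferentiableAt ℝ f z) (hg : DifferentiableAt ℝ g z) (j : Fin (n₁ + n₂)) :
    pd (fun w => f w + g w) j z = pd f j z + pd g j z := by
  unfold pd
  rw [fderiv_fun_add hf hg]
  simp

lemma pd_const_mul {f : (Fin (n₁ + n₂) → ℝ) → ℝ} {z : Fin (n₁ + n₂) → ℝ} (c : ℝ)
    (hf : DifferentiableAt ℝ f z) (j : Fin (n₁ + n₂)) :
    pd (fun w => c * f w) j z = c * pd f j z := by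
  unfold pd
  rw [fderiv_const_mul hf c]
  simp

lemma diffat_coord (k : Fin (n₁ + n₂)) (z : Fin (n₁ + n₂) → ℝ) :
    DifferentiableAt ℝ (fun w : Fin (n₁ + n₂) → ℝ => w k) z :=
  (hasFDerivAt_apply k z).differentiableAt

lemma diffat_comp_pf {H : ℝ × ℝ → ℝ} {z : Fin (n₁ + n₂) → ℝ}
    (hH : DifferentiableAt ℝ H (pf n₁ n₂ z)) :
    DifferentiableAt ℝ (fun w => H (pf n₁ n₂ w)) z :=
  hH.comp z (hasFDerivAt_pf n₁ n₂ z).differentiableAt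

lemma pd_comp_pf {H : ℝ × ℝ → ℝ} {z : Fin (n₁ + n₂) → ℝ}
    (hH : DifferentiableAt ℝ H (pf n₁ n₂ z)) (j : Fin (n₁ + n₂)) :
    pd (fun w => H (pf n₁ n₂ w)) j z = 2 * z j * fderiv ℝ H (pf n₁ n₂ z) (ev n₁ n₂ j) := by
  have h : HasFDerivAt (fun w => H (pf n₁ n₂ w))
      ((fderiv ℝ H (pf n₁ n₂ z)).comp (pD n₁ n₂ z)) z :=
    hH.hasFDerivAt.comp z (hasFDerivAt_pf n₁ n₂ z)
  unfold pd
  rw [h.fderiv, ContinuousLinearMap.comp_apply, pD_eval, _root_.map_smul, smul_eq_mul, mul_assoc]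

end PdTools

lemma pf_mem_quadrant {n₁ n₂ : ℕ} {z : Fin (n₁ + n₂) → ℝ} (hz : z ≠ 0) :
    pf n₁ n₂ z ∈ quadrant := by
  have h1 : (0:ℝ) ≤ sf n₁ n₂ z := Finset.sum_nonneg fun i _ => by positivity
  have h2 : (0:ℝ) ≤ tf n₁ n₂ z := Finset.sum_nonneg fun i _ => by positivity
  refine ⟨h1, h2, fun h0 => hz ?_⟩
  have hs : sf n₁ n₂ z = 0 := congrArg Prod.fst h0
  have ht : tf n₁ n₂ z = 0 := congrArg Prod.snd h0
  funext i
  rcases lt_or_ge i.val n₁ with h | h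
  · have := (Finset.sum_eq_zero_iff_of_nonneg (fun i _ => by positivity)).mp hs i
      (Finset.mem_univ i)
    rw [if_pos h] at this
    exact pow_eq_zero_iff (two_ne_zero) |>.mp this
  · have := (Finset.sum_eq_zero_iff_of_nonneg (fun i _ => by positivity)).mp ht i
      (Finset.mem_univ i)
    rw [if_pos h] at this
    exact pow_eq_zero_iff (two_ne_zero) |>.mp this

lemma mswap1 {α : Type*} (a b c : α) : ({a, b, c} : Multiset α) = {b, a, c} :=
  Multiset.cons_swap a b {c}

lemma mswap2 {α : Type*} (a b c : α) : ({a, b, c} : Multiset α) = {a, c, b} :=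
  congrArg (a ::ₘ ·) (Multiset.cons_swap b c 0)

end CartanAux


open CartanAux in
/-- the Cartan tensor of an `(α₁,α₂)`-norm at `𝐲 = (a,0,…,0,a')`. -/
theorem cartan_at_special_point (n₁ n₂ : ℕ) (hn₁ : 1 ≤ n₁) (hn₂ : 1 ≤ n₂)
    (L : ℝ × ℝ → ℝ) (V : Set (ℝ × ℝ)) (hVopen : IsOpen V) (hVsub : quadrant ⊆ V)
    (hLsm : ContDiffOn ℝ (⊤ : ℕ∞) L V) (hLpos : ∀ p ∈ V, 0 < L p)
    (hLhom : ∀ lam : ℝ, 0 < lam → ∀ p ∈ quadrant, L (lam * p.1, lam * p.2) = lam * L p)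
    (hMink : IsMinkowskiNorm (Fa n₁ n₂ L))
    (i₀ iN : Fin (n₁ + n₂)) (hi₀ : (i₀ : ℕ) = 0) (hiN : (iN : ℕ) = n₁ + n₂ - 1)
    (a a' : ℝ) (ha : a ≠ 0) (ha' : a' ≠ 0) (hnorm : a ^ 2 + a' ^ 2 = 1)
    (Y : Fin (n₁ + n₂) → ℝ)
    (hY : Y = fun i => if i = i₀ then a else if i = iN then a' else 0)
    (l0 l1 l2 l11 l12 l22 l111 l112 l122 l222 : ℝ)
    (hl0 : l0 = L (a ^ 2, a' ^ 2)) (hl1 : l1 = D1 L (a ^ 2, a' ^ 2))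
    (hl2 : l2 = D2 L (a ^ 2, a' ^ 2)) (hl11 : l11 = D1 (D1 L) (a ^ 2, a' ^ 2))
    (hl12 : l12 = D2 (D1 L) (a ^ 2, a' ^ 2)) (hl22 : l22 = D2 (D2 L) (a ^ 2, a' ^ 2))
    (hl111 : l111 = D1 (D1 (D1 L)) (a ^ 2, a' ^ 2))
    (hl112 : l112 = D2 (D1 (D1 L)) (a ^ 2, a' ^ 2))
    (hl122 : l122 = D2 (D2 (D1 L)) (a ^ 2, a' ^ 2))
    (hl222 : l222 = D2 (D2 (D2 L)) (a ^ 2, a' ^ 2))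
    (C : Fin (n₁ + n₂) → Fin (n₁ + n₂) → Fin (n₁ + n₂) → ℝ)
    (hC : C = cartan (Fa n₁ n₂ L) Y) :
    C i₀ i₀ i₀ = 3 * a * l11 + 2 * a ^ 3 * l111 ∧
    C iN iN i₀ = a * l12 + 2 * a * a' ^ 2 * l122 ∧
    C iN i₀ i₀ = a' * l12 + 2 * a ^ 2 * a' * l112 ∧
    C iN iN iN = 3 * a' * l22 + 2 * a' ^ 3 * l222 ∧
    (∀ i : Fin (n₁ + n₂), 1 ≤ (i : ℕ) → (i : ℕ) < n₁ →
      C i i i₀ = a * l11 ∧ C i i iN = a' * l12) ∧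
    (∀ i : Fin (n₁ + n₂), n₁ ≤ (i : ℕ) → (i : ℕ) < n₁ + n₂ - 1 →
      C i i i₀ = a * l12 ∧ C i i iN = a' * l22) ∧
    (∀ i j k : Fin (n₁ + n₂),
      ¬(({i, j, k} : Multiset (Fin (n₁ + n₂))) = {i₀, i₀, i₀} ∨
        ({i, j, k} : Multiset (Fin (n₁ + n₂))) = {iN, iN, i₀} ∨
        ({i, j, k} : Multiset (Fin (n₁ + n₂))) = {iN, i₀, i₀} ∨
        ({i, j, k} : Multiset (Fin (n₁ + n₂))) = {iN, iN, iN} ∨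
        (∃ m : Fin (n₁ + n₂),
          ((1 ≤ (m : ℕ) ∧ (m : ℕ) < n₁) ∨ (n₁ ≤ (m : ℕ) ∧ (m : ℕ) < n₁ + n₂ - 1)) ∧
          (({i, j, k} : Multiset (Fin (n₁ + n₂))) = {m, m, i₀} ∨
           ({i, j, k} : Multiset (Fin (n₁ + n₂))) = {m, m, iN}))) →
      C i j k = 0) := by
  subst hC
  -- basic index facts
  have hi₀lt : (i₀ : ℕ) < n₁ := by omega
  have hiNge : ¬ (iN : ℕ) < n₁ := by omega
  have hne : i₀ ≠ iN := by
    intro h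
    have := congrArg Fin.val h
    omega
  have hYi₀ : Y i₀ = a := by simp [hY]
  have hYiN : Y iN = a' := by simp [hY, hne.symm]
  have hY0 : ∀ m : Fin (n₁ + n₂), m ≠ i₀ → m ≠ iN → Y m = 0 := by
    intro m h1 h2; simp [hY, h1, h2]
  have hYne : Y ≠ 0 := by
    intro h
    apply ha
    rw [← hYi₀, h]; rfl
  have hevi₀ : ev n₁ n₂ i₀ = ((1:ℝ), (0:ℝ)) := by simp [ev, hi₀lt]
  have heviN : ev n₁ n₂ iN = ((0:ℝ), (1:ℝ)) := by simp [ev, hiNge]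
  -- membership and differentiability facts
  have hpfV : ∀ w : Fin (n₁ + n₂) → ℝ, w ≠ 0 → pf n₁ n₂ w ∈ V :=
    fun w hw => hVsub (pf_mem_quadrant hw)
  have hLd : ∀ w : Fin (n₁ + n₂) → ℝ, w ≠ 0 → DifferentiableAt ℝ L (pf n₁ n₂ w) :=
    fun w hw => diffat_of_smooth hVopen hLsm (hpfV w hw)
  have hphd : ∀ (v : ℝ × ℝ) (w : Fin (n₁ + n₂) → ℝ), w ≠ 0 →
      DifferentiableAt ℝ (ph L v) (pf n₁ n₂ w) :=
    fun v w hw => diffat_of_smooth hVopen (ph_smooth hVopen hLsm v) (hpfV w hw)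
  have hpsd : ∀ (u v : ℝ × ℝ) (w : Fin (n₁ + n₂) → ℝ), w ≠ 0 →
      DifferentiableAt ℝ (ps L u v) (pf n₁ n₂ w) :=
    fun u v w hw => diffat_of_smooth hVopen (ps_smooth hVopen hLsm u v) (hpfV w hw)
  have hopen : IsOpen {w : Fin (n₁ + n₂) → ℝ | w ≠ 0} := isOpen_ne
  have hnhds : ∀ {w : Fin (n₁ + n₂) → ℝ}, w ≠ 0 →
      {u : Fin (n₁ + n₂) → ℝ | u ≠ 0} ∈ nhds w := fun hw => hopen.mem_nhds hw
  -- Stage 1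
  have E1 : ∀ w : Fin (n₁ + n₂) → ℝ, w ≠ 0 → ∀ k,
      pd (fun u => Fa n₁ n₂ L u ^ 2) k w = 2 * w k * ph L (ev n₁ n₂ k) (pf n₁ n₂ w) := by
    intro w hw k
    have h1 : pd (fun u => Fa n₁ n₂ L u ^ 2) k w = pd (fun u => L (pf n₁ n₂ u)) k w := by
      refine pd_congr (Filter.eventually_of_mem (hnhds hw) (fun u hu => ?_)) k
      show Fa n₁ n₂ L u ^ 2 = L (pf n₁ n₂ u)
      have hpos := hLpos _ (hVsub (pf_mem_quadrant hu))
      simpa [Fa, pf, sf, tf] using Real.sq_sqrt hpos.le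
    rw [h1, pd_comp_pf (hLd w hw) k]
    rfl
  -- Stage 2
  have E2 : ∀ w : Fin (n₁ + n₂) → ℝ, w ≠ 0 → ∀ j k,
      pd (pd (fun u => Fa n₁ n₂ L u ^ 2) k) j w =
        2 * (if k = j then (1:ℝ) else 0) * ph L (ev n₁ n₂ k) (pf n₁ n₂ w)
        + 4 * w k * w j * ps L (ev n₁ n₂ j) (ev n₁ n₂ k) (pf n₁ n₂ w) := by
    intro w hw j k
    have h1 : pd (pd (fun u => Fa n₁ n₂ L u ^ 2) k) j w
        = pd (fun u => 2 * u k * ph L (ev n₁ n₂ k) (pf n₁ n₂ u)) j w :=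
      pd_congr (Filter.eventually_of_mem (hnhds hw) (fun u hu => E1 u hu k)) j
    have df : DifferentiableAt ℝ (fun u : Fin (n₁ + n₂) → ℝ => 2 * u k) w :=
      (diffat_coord k w).const_mul 2
    have dg : DifferentiableAt ℝ (fun u => ph L (ev n₁ n₂ k) (pf n₁ n₂ u)) w :=
      diffat_comp_pf (hphd _ w hw)
    rw [h1, pd_mul df dg j, pd_comp_pf (hphd _ w hw) j,
      pd_const_mul 2 (diffat_coord k w) j, pd_coord,
      show fderiv ℝ (ph L (ev n₁ n₂ k)) (pf n₁ n₂ w) (ev n₁ n₂ j)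
        = ps L (ev n₁ n₂ j) (ev n₁ n₂ k) (pf n₁ n₂ w) from rfl]
    ring
  -- Stage 3 at Y
  have E3 : ∀ i j k : Fin (n₁ + n₂),
      pd (pd (pd (fun u => Fa n₁ n₂ L u ^ 2) k) j) i Y =
        4 * (if k = j then (1:ℝ) else 0) * Y i * ps L (ev n₁ n₂ i) (ev n₁ n₂ k) (pf n₁ n₂ Y)
        + 4 * (if k = i then (1:ℝ) else 0) * Y j * ps L (ev n₁ n₂ j) (ev n₁ n₂ k) (pf n₁ n₂ Y)
        + 4 * (if j = i then (1:ℝ) else 0) * Y k * ps L (ev n₁ n₂ j) (ev n₁ n₂ k) (pf n₁ n₂ Y)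
        + 8 * Y i * Y j * Y k * pt L (ev n₁ n₂ i) (ev n₁ n₂ j) (ev n₁ n₂ k) (pf n₁ n₂ Y) := by
    intro i j k
    have h1 : pd (pd (pd (fun u => Fa n₁ n₂ L u ^ 2) k) j) i Y
        = pd (fun u => 2 * (if k = j then (1:ℝ) else 0) * ph L (ev n₁ n₂ k) (pf n₁ n₂ u)
            + 4 * u k * u j * ps L (ev n₁ n₂ j) (ev n₁ n₂ k) (pf n₁ n₂ u)) i Y :=
      pd_congr (Filter.eventually_of_mem (hnhds hYne) (fun u hu => E2 u hu j k)) i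
    have dph : DifferentiableAt ℝ (fun u => ph L (ev n₁ n₂ k) (pf n₁ n₂ u)) Y :=
      diffat_comp_pf (hphd _ Y hYne)
    have dps : DifferentiableAt ℝ
        (fun u => ps L (ev n₁ n₂ j) (ev n₁ n₂ k) (pf n₁ n₂ u)) Y :=
      diffat_comp_pf (hpsd _ _ Y hYne)
    have dpoly : DifferentiableAt ℝ (fun u : Fin (n₁ + n₂) → ℝ => 4 * u k * u j) Y :=
      ((diffat_coord k Y).const_mul 4).mul (diffat_coord j Y)
    rw [h1, pd_add (dph.const_mul _) (dpoly.fun_mul dps) i,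
      pd_const_mul _ dph i, pd_comp_pf (hphd _ Y hYne) i,
      pd_mul dpoly dps i, pd_comp_pf (hpsd _ _ Y hYne) i,
      pd_mul ((diffat_coord k Y).const_mul 4) (diffat_coord j Y) i,
      pd_const_mul 4 (diffat_coord k Y) i, pd_coord, pd_coord,
      show fderiv ℝ (ph L (ev n₁ n₂ k)) (pf n₁ n₂ Y) (ev n₁ n₂ i)
        = ps L (ev n₁ n₂ i) (ev n₁ n₂ k) (pf n₁ n₂ Y) from rfl,
      show fderiv ℝ (ps L (ev n₁ n₂ j) (ev n₁ n₂ k)) (pf n₁ n₂ Y) (ev n₁ n₂ i)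
        = pt L (ev n₁ n₂ i) (ev n₁ n₂ j) (ev n₁ n₂ k) (pf n₁ n₂ Y) from rfl]
    ring
  -- the Cartan tensor formula
  have hCf : ∀ i j k : Fin (n₁ + n₂),
      cartan (Fa n₁ n₂ L) Y i j k =
        (if k = j then (1:ℝ) else 0) * Y i * ps L (ev n₁ n₂ i) (ev n₁ n₂ k) (pf n₁ n₂ Y)
        + (if k = i then (1:ℝ) else 0) * Y j * ps L (ev n₁ n₂ j) (ev n₁ n₂ k) (pf n₁ n₂ Y)
        + (if j = i then (1:ℝ) else 0) * Y k * ps L (ev n₁ n₂ j) (ev n₁ n₂ k) (pf n₁ n₂ Y)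
        + 2 * Y i * Y j * Y k * pt L (ev n₁ n₂ i) (ev n₁ n₂ j) (ev n₁ n₂ k) (pf n₁ n₂ Y) := by
    intro i j k
    unfold cartan
    rw [E3 i j k]
    ring
  -- value of pf at Y
  have hpfY : pf n₁ n₂ Y = (a ^ 2, a' ^ 2) := by
    have hs : sf n₁ n₂ Y = a ^ 2 := by
      unfold sf
      rw [Finset.sum_eq_single i₀]
      · rw [if_pos hi₀lt, hYi₀]
      · intro b _ hb
        by_cases hbN : b = iN
        · subst hbN; rw [if_neg hiNge]
        · rw [hY0 b hb hbN]
          simp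
      · intro h; exact absurd (Finset.mem_univ i₀) h
    have ht : tf n₁ n₂ Y = a' ^ 2 := by
      unfold tf
      rw [Finset.sum_eq_single iN]
      · rw [if_pos (Nat.not_lt.mp hiNge), hYiN]
      · intro b _ hb
        by_cases hb0 : b = i₀
        · subst hb0
          rw [if_neg (by omega)]
        · rw [hY0 b hb0 hb]
          simp
      · intro h; exact absurd (Finset.mem_univ iN) h
    unfold pf
    rw [hs, ht]
  -- second and third derivative values
  have hps11 : ps L ((1:ℝ), (0:ℝ)) ((1:ℝ), (0:ℝ)) (pf n₁ n₂ Y) = l11 := by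
    rw [hpfY, hl11]; rfl
  have hps21 : ps L ((0:ℝ), (1:ℝ)) ((1:ℝ), (0:ℝ)) (pf n₁ n₂ Y) = l12 := by
    rw [hpfY, hl12]; rfl
  have hps12 : ps L ((1:ℝ), (0:ℝ)) ((0:ℝ), (1:ℝ)) (pf n₁ n₂ Y) = l12 := by
    rw [ps_symm hVopen hLsm (hpfV Y hYne) _ _]
    exact hps21
  have hps22 : ps L ((0:ℝ), (1:ℝ)) ((0:ℝ), (1:ℝ)) (pf n₁ n₂ Y) = l22 := by
    rw [hpfY, hl22]; rfl
  have hpt111 : pt L ((1:ℝ),(0:ℝ)) ((1:ℝ),(0:ℝ)) ((1:ℝ),(0:ℝ)) (pf n₁ n₂ Y) = l111 := by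
    rw [hpfY, hl111]; rfl
  have hpt211 : pt L ((0:ℝ),(1:ℝ)) ((1:ℝ),(0:ℝ)) ((1:ℝ),(0:ℝ)) (pf n₁ n₂ Y) = l112 := by
    rw [hpfY, hl112]; rfl
  have hpt221 : pt L ((0:ℝ),(1:ℝ)) ((0:ℝ),(1:ℝ)) ((1:ℝ),(0:ℝ)) (pf n₁ n₂ Y) = l122 := by
    rw [hpfY, hl122]; rfl
  have hpt222 : pt L ((0:ℝ),(1:ℝ)) ((0:ℝ),(1:ℝ)) ((0:ℝ),(1:ℝ)) (pf n₁ n₂ Y) = l222 := by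
    rw [hpfY, hl222]; rfl
  -- index classification
  have hmclass : ∀ m : Fin (n₁ + n₂), m ≠ i₀ → m ≠ iN →
      ((1 ≤ (m : ℕ) ∧ (m : ℕ) < n₁) ∨ (n₁ ≤ (m : ℕ) ∧ (m : ℕ) < n₁ + n₂ - 1)) := by
    intro m h1 h2
    have e1 : (m : ℕ) ≠ 0 := fun h => h1 (Fin.ext (by omega))
    have e2 : (m : ℕ) ≠ n₁ + n₂ - 1 := fun h => h2 (Fin.ext (by omega))
    have := m.isLt
    omega
  refine ⟨?_, ?_, ?_, ?_, ?_, ?_, ?_⟩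
  · -- C i₀ i₀ i₀
    rw [hCf, hevi₀, hYi₀, hps11, hpt111]
    simp only [eq_self_iff_true, if_true]
    ring
  · -- C iN iN i₀
    rw [hCf, hevi₀, heviN, hYi₀, hYiN, hps21, hpt221, if_neg hne]
    simp only [eq_self_iff_true, if_true]
    ring
  · -- C iN i₀ i₀
    rw [hCf, hevi₀, heviN, hYi₀, hYiN, hps21, hpt211, if_neg hne]
    simp only [eq_self_iff_true, if_true]
    ring
  · -- C iN iN iN
    rw [hCf, heviN, hYiN, hps22, hpt222]
    simp only [eq_self_iff_true, if_true]
    ring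
  · -- first block middle indices
    intro i h1 h2
    have hii₀ : i ≠ i₀ := fun h => by
      have := congrArg Fin.val h; omega
    have hiiN : i ≠ iN := fun h => by
      have := congrArg Fin.val h; omega
    have hevi : ev n₁ n₂ i = ((1:ℝ), (0:ℝ)) := by simp [ev, h2]
    have hYi : Y i = 0 := hY0 i hii₀ hiiN
    constructor
    · rw [hCf, hevi, hevi₀, hYi₀, hYi, hps11, if_neg (Ne.symm hii₀)]
      simp only [eq_self_iff_true, if_true]
      ring
    · rw [hCf, hevi, heviN, hYiN, hYi, hps12, if_neg (Ne.symm hiiN)]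
      simp only [eq_self_iff_true, if_true]
      ring
  · -- second block middle indices
    intro i h1 h2
    have hii₀ : i ≠ i₀ := fun h => by
      have := congrArg Fin.val h; omega
    have hiiN : i ≠ iN := fun h => by
      have := congrArg Fin.val h; omega
    have hevi : ev n₁ n₂ i = ((0:ℝ), (1:ℝ)) := by simp [ev, Nat.not_lt.mpr h1]
    have hYi : Y i = 0 := hY0 i hii₀ hiiN
    constructor
    · rw [hCf, hevi, hevi₀, hYi₀, hYi, hps21, if_neg (Ne.symm hii₀)]
      simp only [eq_self_iff_true, if_true]
      ring
    · rw [hCf, hevi, heviN, hYiN, hYi, hps22, if_neg (Ne.symm hiiN)]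
      simp only [eq_self_iff_true, if_true]
      ring
  · -- vanishing coefficients
    intro i j k h
    -- all-in-{i₀,iN} implies listed
    have hP4 : ∀ u v w : Fin (n₁ + n₂), (u = i₀ ∨ u = iN) → (v = i₀ ∨ v = iN) →
        (w = i₀ ∨ w = iN) →
        (({u, v, w} : Multiset (Fin (n₁ + n₂))) = {i₀, i₀, i₀} ∨
         ({u, v, w} : Multiset (Fin (n₁ + n₂))) = {iN, iN, i₀} ∨
         ({u, v, w} : Multiset (Fin (n₁ + n₂))) = {iN, i₀, i₀} ∨
         ({u, v, w} : Multiset (Fin (n₁ + n₂))) = {iN, iN, iN}) := by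
      intro u v w hu hv hw
      rcases hu with rfl | rfl <;> rcases hv with rfl | rfl <;> rcases hw with rfl | rfl
      · exact Or.inl rfl
      · refine Or.inr (Or.inr (Or.inl ?_))
        conv_lhs => rw [mswap2, mswap1]
      · refine Or.inr (Or.inr (Or.inl ?_))
        conv_lhs => rw [mswap1]
      · refine Or.inr (Or.inl ?_)
        conv_lhs => rw [mswap1, mswap2]
      · exact Or.inr (Or.inr (Or.inl rfl))
      · refine Or.inr (Or.inl ?_)
        conv_lhs => rw [mswap2]
      · exact Or.inr (Or.inl rfl)
      · exact Or.inr (Or.inr (Or.inr rfl))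
    have hall : ¬((i = i₀ ∨ i = iN) ∧ (j = i₀ ∨ j = iN) ∧ (k = i₀ ∨ k = iN)) := by
      rintro ⟨hi, hj, hk⟩
      rcases hP4 i j k hi hj hk with h1 | h1 | h1 | h1
      · exact h (Or.inl h1)
      · exact h (Or.inr (Or.inl h1))
      · exact h (Or.inr (Or.inr (Or.inl h1)))
      · exact h (Or.inr (Or.inr (Or.inr (Or.inl h1))))
    have hpair : ∀ m u : Fin (n₁ + n₂), ¬(m = i₀ ∨ m = iN) → (u = i₀ ∨ u = iN) →
        ({i, j, k} : Multiset (Fin (n₁ + n₂))) = {m, m, u} → False := by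
      intro m u hm hu heq
      push_neg at hm
      refine h (Or.inr (Or.inr (Or.inr (Or.inr ⟨m, hmclass m hm.1 hm.2, ?_⟩))))
      rcases hu with rfl | rfl
      · exact Or.inl heq
      · exact Or.inr heq
    have hYnot : ∀ m : Fin (n₁ + n₂), ¬(m = i₀ ∨ m = iN) → Y m = 0 := by
      intro m hm; push_neg at hm; exact hY0 m hm.1 hm.2
    rw [hCf]
    have t1 : (if k = j then (1:ℝ) else 0) * Y i
        * ps L (ev n₁ n₂ i) (ev n₁ n₂ k) (pf n₁ n₂ Y) = 0 := by
      by_cases hkj : k = j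
      · by_cases hPi : i = i₀ ∨ i = iN
        · by_cases hPk : k = i₀ ∨ k = iN
          · exact absurd ⟨hPi, hkj ▸ hPk, hPk⟩ hall
          · exact absurd (by subst hkj; conv_lhs => rw [mswap1, mswap2])
              (fun hq => hpair k i hPk hPi hq)
        · rw [hYnot i hPi]; ring
      · rw [if_neg hkj]; ring
    have t2 : (if k = i then (1:ℝ) else 0) * Y j
        * ps L (ev n₁ n₂ j) (ev n₁ n₂ k) (pf n₁ n₂ Y) = 0 := by
      by_cases hki : k = i
      · by_cases hPj : j = i₀ ∨ j = iN
        · by_cases hPk : k = i₀ ∨ k = iN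
          · exact absurd ⟨hki ▸ hPk, hPj, hPk⟩ hall
          · exact absurd (by subst hki; conv_lhs => rw [mswap2])
              (fun hq => hpair k j hPk hPj hq)
        · rw [hYnot j hPj]; ring
      · rw [if_neg hki]; ring
    have t3 : (if j = i then (1:ℝ) else 0) * Y k
        * ps L (ev n₁ n₂ j) (ev n₁ n₂ k) (pf n₁ n₂ Y) = 0 := by
      by_cases hji : j = i
      · by_cases hPk : k = i₀ ∨ k = iN
        · by_cases hPj : j = i₀ ∨ j = iN
          · exact absurd ⟨hji ▸ hPj, hPj, hPk⟩ hall
          · exact absurd (by subst hji; rfl)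
              (fun hq => hpair j k hPj hPk hq)
        · rw [hYnot k hPk]; ring
      · rw [if_neg hji]; ring
    have t4 : 2 * Y i * Y j * Y k
        * pt L (ev n₁ n₂ i) (ev n₁ n₂ j) (ev n₁ n₂ k) (pf n₁ n₂ Y) = 0 := by
      by_cases hPi : i = i₀ ∨ i = iN
      · by_cases hPj : j = i₀ ∨ j = iN
        · by_cases hPk : k = i₀ ∨ k = iN
          · exact absurd ⟨hPi, hPj, hPk⟩ hall
          · rw [hYnot k hPk]; ring
        · rw [hYnot j hPj]; ring
      · rw [hYnot i hPi]; ring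
    rw [t1, t2, t3, t4]
    ring
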